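/- arXiv:1911.01973 — 2 statements merged into one kernel-verified Lean document; each statement's English description precedes it below -/
import Mathlib

section
/- Let φ be a CNF formula with clauses C_1, …, C_m over a variable set partitioned as V = V_A ⊔ V_B. Then φ is satisfiable (there is a full assignment σ : V → Bool satisfying every clause) if and only if there exist partial assignments a : V_A → Bool and b : V_B → Bool such that the integer inner product ⟨f_A(a), f_B(b)⟩ = 0. This is the correctness of the fine-grained reduction from CNF-SAT to Orthogonal Vectors. -/
/- A literal over the variable set `V_A ⊕ V_B` is a variable together with a
polarity (`true` = positive, `false` = negative). A literal `(v, pol)` evaluates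
to true under an assignment `σ` exactly when `σ v = pol`. -/

/-- The literal `l` is over a variable in `V_A` and evaluates to true under the
partial assignment `a : V_A → Bool`. -/
def litTrueA {VA VB : Type} (a : VA → Bool) (l : (VA ⊕ VB) × Bool) : Bool :=
  Sum.elim (fun v => a v == l.2) (fun _ => false) l.1

/-- The literal `l` is over a variable in `V_B` and evaluates to true under the
partial assignment `b : V_B → Bool`. -/
def litTrueB {VA VB : Type} (b : VB → Bool) (l : (VA ⊕ VB) × Bool) : Bool :=
  Sum.elim (fun _ => false) (fun v => b v == l.2) l.1

/-- The `j`-th coordinate of the vector `f_A(a) ∈ {0,1}^m`: it is `0` if some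
literal of clause `C j` over a variable in `V_A` evaluates to true under `a`,
and `1` otherwise. -/
def fA {VA VB : Type} (m : ℕ) (C : Fin m → Finset ((VA ⊕ VB) × Bool))
    (a : VA → Bool) (j : Fin m) : ℤ :=
  if ∃ l ∈ C j, litTrueA a l = true then 0 else 1

/-- The `j`-th coordinate of the vector `f_B(b) ∈ {0,1}^m`. -/
def fB {VA VB : Type} (m : ℕ) (C : Fin m → Finset ((VA ⊕ VB) × Bool))
    (b : VB → Bool) (j : Fin m) : ℤ :=
  if ∃ l ∈ C j, litTrueB b l = true then 0 else 1

/-! The coordinate `fA a j * fB b j` vanishes exactly when clause `j` is satisfied by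
`a` on its `V_A`-literals or by `b` on its `V_B`-literals, i.e. by the glued assignment
`Sum.elim a b`. The coordinates are nonnegative, so the inner product vanishes iff every
clause is satisfied, and every full assignment is such a gluing. -/

theorem litTrueA_or_litTrueB_iff {VA VB : Type} (a : VA → Bool) (b : VB → Bool)
    (l : (VA ⊕ VB) × Bool) :
    litTrueA a l = true ∨ litTrueB b l = true ↔ Sum.elim a b l.1 = l.2 := by
  obtain ⟨v | v, p⟩ := l <;> simp [litTrueA, litTrueB]

theorem fA_mul_fB_eq_zero_iff {VA VB : Type} (m : ℕ) (C : Fin m → Finset ((VA ⊕ VB) × Bool))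
    (a : VA → Bool) (b : VB → Bool) (j : Fin m) :
    fA m C a j * fB m C b j = 0 ↔ ∃ l ∈ C j, Sum.elim a b l.1 = l.2 := by
  have hsplit : (∃ l ∈ C j, Sum.elim a b l.1 = l.2) ↔
      (∃ l ∈ C j, litTrueA a l = true) ∨ ∃ l ∈ C j, litTrueB b l = true := by
    simp only [← litTrueA_or_litTrueB_iff, ← exists_or, and_or_left]
  rw [hsplit, fA, fB]
  split_ifs <;> simp_all

theorem fA_mul_fB_nonneg {VA VB : Type} (m : ℕ) (C : Fin m → Finset ((VA ⊕ VB) × Bool))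
    (a : VA → Bool) (b : VB → Bool) (j : Fin m) :
    0 ≤ fA m C a j * fB m C b j := by
  unfold fA fB
  split_ifs <;> norm_num

/-- Correctness of the fine-grained reduction from CNF-SAT to Orthogonal
Vectors: a CNF formula with clauses `C 1, …, C m` over the variable set
`V_A ⊔ V_B` is satisfiable iff there exist partial assignments `a : V_A → Bool`
and `b : V_B → Bool` with `⟨f_A(a), f_B(b)⟩ = 0`. -/
theorem cnf_sat_iff_exists_orthogonal_pair
    {VA VB : Type} (m : ℕ) (C : Fin m → Finset ((VA ⊕ VB) × Bool)) :
    (∃ σ : VA ⊕ VB → Bool, ∀ j : Fin m, ∃ l ∈ C j, σ l.1 = l.2)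
      ↔ ∃ (a : VA → Bool) (b : VB → Bool),
          ∑ j : Fin m, fA m C a j * fB m C b j = 0 := by
  have hsum (a : VA → Bool) (b : VB → Bool) :
      ∑ j : Fin m, fA m C a j * fB m C b j = 0 ↔ ∀ j, ∃ l ∈ C j, Sum.elim a b l.1 = l.2 := by
    simp only [Finset.sum_eq_zero_iff_of_nonneg (fun j _ => fA_mul_fB_nonneg m C a b j),
      Finset.mem_univ, true_implies, fA_mul_fB_eq_zero_iff]
  simp only [hsum]
  constructor
  · rintro ⟨σ, hσ⟩
    exact ⟨σ ∘ Sum.inl, σ ∘ Sum.inr, by rwa [Sum.elim_comp_inl_inr]⟩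
  · rintro ⟨a, b, hab⟩
    exact ⟨Sum.elim a b, hab⟩
end

section
/- Let x, y ∈ ℝ^{D} and let W ∈ ℝ satisfy W ≥ ‖x‖₂² and W ≥ ‖y‖₂². Define x'' = (x, √(W − ‖x‖₂²), 0) ∈ ℝ^{D+2} and y'' = (y, 0, √(W − ‖y‖₂²)) ∈ ℝ^{D+2}. Then ‖x''‖₂² = ‖y''‖₂² = W and ‖x'' − y''‖₂² = 2W − 2⟨x, y⟩. In particular, when x = x' and y = y' arise from the tensoring construction x'_{i,j} = x_i x_j, y'_{i,j} = −y_i y_j for vectors x, y ∈ ℤ^d (so that ⟨x', y'⟩ = −⟨x,y⟩²), one gets ‖x'' − y''‖₂² = 2W + 2(⟨x, y⟩)², hence ‖x'' − y''‖₂² ≥ 2W always, with equality if and only if ⟨x, y⟩ = 0. -/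
/-! The padding coordinates top each squared norm up to `W` and sit in different positions, so in
`‖x'' - y''‖² = ‖x''‖² + ‖y''‖² - 2⟨x'', y''⟩` they leave the cross term `⟨x, y⟩` unchanged. -/

/-- `x'' = (x, √(W − ‖x‖₂²), 0) ∈ ℝ^{D+2}`. -/
noncomputable def liftA (D : ℕ) (x : Fin D → ℝ) (W : ℝ) : Fin (D + 2) → ℝ :=
  Fin.append x ![Real.sqrt (W - ∑ i, (x i) ^ 2), 0]

/-- `y'' = (y, 0, √(W − ‖y‖₂²)) ∈ ℝ^{D+2}`. -/
noncomputable def liftB (D : ℕ) (y : Fin D → ℝ) (W : ℝ) : Fin (D + 2) → ℝ :=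
  Fin.append y ![0, Real.sqrt (W - ∑ i, (y i) ^ 2)]

theorem Fin.sum_comp_append {M α : Type*} [AddCommMonoid M] {m n : ℕ} (f : α → M)
    (u : Fin m → α) (v : Fin n → α) :
    ∑ i, f (Fin.append u v i) = ∑ i, f (u i) + ∑ i, f (v i) := by
  simp [Fin.sum_univ_add]

theorem Fin.append_sub_append {G : Type*} [Sub G] {m n : ℕ} (u u' : Fin m → G)
    (v v' : Fin n → G) (i : Fin (m + n)) :
    Fin.append u v i - Fin.append u' v' i = Fin.append (u - u') (v - v') i := by
  induction i using Fin.addCases <;> simp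

theorem Finset.sum_sub_sq {ι R : Type*} [CommRing R] (s : Finset ι) (x y : ι → R) :
    ∑ i ∈ s, (x i - y i) ^ 2
      = ∑ i ∈ s, x i ^ 2 + ∑ i ∈ s, y i ^ 2 - 2 * ∑ i ∈ s, x i * y i := by
  simp only [sub_sq, Finset.sum_add_distrib, Finset.sum_sub_distrib, Finset.mul_sum, mul_assoc]
  abel

section Lift

variable {D : ℕ} {x y : Fin D → ℝ} {W : ℝ}

theorem sum_sq_liftA (hx : ∑ i, x i ^ 2 ≤ W) : ∑ i, liftA D x W i ^ 2 = W := by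
  rw [liftA, Fin.sum_comp_append (· ^ 2)]
  simp [Real.sq_sqrt (sub_nonneg.2 hx)]

theorem sum_sq_liftB (hy : ∑ i, y i ^ 2 ≤ W) : ∑ i, liftB D y W i ^ 2 = W := by
  rw [liftB, Fin.sum_comp_append (· ^ 2)]
  simp [Real.sq_sqrt (sub_nonneg.2 hy)]

theorem sum_sq_liftA_sub_liftB (hx : ∑ i, x i ^ 2 ≤ W) (hy : ∑ i, y i ^ 2 ≤ W) :
    ∑ i, (liftA D x W i - liftB D y W i) ^ 2 = 2 * W - 2 * ∑ i, x i * y i := by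
  simp only [liftA, liftB, Fin.append_sub_append]
  rw [Fin.sum_comp_append (· ^ 2)]
  simp only [Pi.sub_apply, Finset.sum_sub_sq, Fin.sum_univ_two, Matrix.cons_val_zero,
    Matrix.cons_val_one, Matrix.cons_val_fin_one,
    Real.sq_sqrt (sub_nonneg.2 hx), Real.sq_sqrt (sub_nonneg.2 hy)]
  ring

end Lift

/-- Correctness of the reduction from integral Orthogonal Vectors to the
Bichromatic Closest Pair problem: if `W ≥ ‖x‖₂²` and `W ≥ ‖y‖₂²`, then
`‖x''‖₂² = ‖y''‖₂² = W` and `‖x'' − y''‖₂² = 2W − 2⟨x, y⟩`.  In particular,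
when `x` and `y` arise from the tensoring construction on integer vectors
`z, w ∈ ℤ^d` (so that `⟨x, y⟩ = −⟨z, w⟩²`), one has
`‖x'' − y''‖₂² = 2W + 2⟨z, w⟩² ≥ 2W`, with equality iff `⟨z, w⟩ = 0`. -/
theorem lift_norms_and_dist (D : ℕ) (x y : Fin D → ℝ) (W : ℝ)
    (hx : ∑ i, (x i) ^ 2 ≤ W) (hy : ∑ i, (y i) ^ 2 ≤ W) :
    (∑ i, (liftA D x W i) ^ 2 = W)
    ∧ (∑ i, (liftB D y W i) ^ 2 = W)
    ∧ (∑ i, (liftA D x W i - liftB D y W i) ^ 2 = 2 * W - 2 * ∑ i, x i * y i)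
    ∧ (∀ (d : ℕ) (z w : Fin d → ℤ),
        (∑ i, x i * y i) = -((∑ i, z i * w i : ℤ) : ℝ) ^ 2 →
          (∑ i, (liftA D x W i - liftB D y W i) ^ 2
              = 2 * W + 2 * ((∑ i, z i * w i : ℤ) : ℝ) ^ 2)
          ∧ 2 * W ≤ ∑ i, (liftA D x W i - liftB D y W i) ^ 2
          ∧ (∑ i, (liftA D x W i - liftB D y W i) ^ 2 = 2 * W
              ↔ (∑ i, z i * w i) = 0)) := by
  have hdist := sum_sq_liftA_sub_liftB hx hy
  refine ⟨sum_sq_liftA hx, sum_sq_liftB hy, hdist, fun d z w hzw => ?_⟩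
  rw [hdist, hzw]
  refine ⟨by ring, by linarith [sq_nonneg ((∑ i, z i * w i : ℤ) : ℝ)], ?_⟩
  simp only [sub_eq_self, mul_eq_zero, two_ne_zero, false_or, neg_eq_zero,
    pow_eq_zero_iff two_ne_zero, Int.cast_eq_zero]
end
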